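/- Let x, y, z be real numbers with 0 ≤ z < x, 0 ≤ y, and x + y ≤ 2. Then arccos((x + y)/2) − arccos((y + z)/2) < −(x − z)/√(4 − (y + z)²). -/

import Mathlib

/-!
By the mean value theorem, `arccos b - arccos a = -(b - a) / √(1 - c²)` for some `c ∈ (a, b)`.
On `[0, 1)` the factor `1 / √(1 - t²)` is strictly increasing, so the tangent slope at the left
endpoint `a` strictly overestimates this difference. The theorem is the case
`a = (y + z) / 2`, `b = (x + y) / 2`.
-/

open Real Set

lemma strictMonoOn_one_div_sqrt_one_sub_sq :
    StrictMonoOn (fun t : ℝ => 1 / √(1 - t ^ 2)) (Ico 0 1) := by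
  intro s ⟨hs0, _⟩ t ⟨_, ht1⟩ hst
  have ht : 0 < 1 - t ^ 2 := by nlinarith
  have hlt : 1 - t ^ 2 < 1 - s ^ 2 := by nlinarith
  exact one_div_lt_one_div_of_lt (sqrt_pos.mpr ht) (sqrt_lt_sqrt ht.le hlt)

lemma arccos_sub_arccos_lt {a b : ℝ} (ha : 0 ≤ a) (hab : a < b) (hb : b ≤ 1) :
    arccos b - arccos a < -((b - a) / √(1 - a ^ 2)) := by
  obtain ⟨c, ⟨hac, hcb⟩, hslope⟩ := exists_hasDerivAt_eq_slope arccos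
    (fun t => -(1 / √(1 - t ^ 2))) hab continuous_arccos.continuousOn
    (fun t ht => hasDerivAt_arccos (by linarith [ht.1]) (by linarith [ht.2]))
  have hdiff : arccos b - arccos a = -((b - a) * (1 / √(1 - c ^ 2))) := by
    rw [← mul_neg, hslope, mul_div_cancel₀ _ (sub_pos.mpr hab).ne']
  have hmono : 1 / √(1 - a ^ 2) < 1 / √(1 - c ^ 2) :=
    strictMonoOn_one_div_sqrt_one_sub_sq ⟨ha, by linarith⟩ ⟨by linarith, by linarith⟩ hac
  rw [hdiff, div_eq_mul_one_div (b - a)]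
  exact neg_lt_neg (mul_lt_mul_of_pos_left hmono (sub_pos.mpr hab))

theorem arccos_comparison (x y z : ℝ) (hz : 0 ≤ z) (hzx : z < x) (hy : 0 ≤ y)
    (hxy : x + y ≤ 2) :
    Real.arccos ((x + y) / 2) - Real.arccos ((y + z) / 2)
      < -((x - z) / Real.sqrt (4 - (y + z) ^ 2)) := by
  have hsqrt : √(4 - (y + z) ^ 2) = 2 * √(1 - ((y + z) / 2) ^ 2) := by
    rw [show 4 - (y + z) ^ 2 = 2 ^ 2 * (1 - ((y + z) / 2) ^ 2) by ring,
      sqrt_mul (by norm_num), sqrt_sq (by norm_num)]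
  have hdiff : x - z = 2 * ((x + y) / 2 - (y + z) / 2) := by ring
  rw [hsqrt, hdiff, mul_div_mul_left _ _ two_ne_zero]
  exact arccos_sub_arccos_lt (by linarith) (by linarith) (by linarith)
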